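/- arXiv:math/0509270 — 3 statements merged into one kernel-verified Lean document; each statement's English description precedes it below -/
import Mathlib

section
/- With T, ρ, σ, μ as above, for any u, v ∈ T with u < v: ∫_{(u,v)} a μ(da) = v²/2 − u²/2 − u·(σ(u)−u)/2 − v·(v−ρ(v))/2. -/
open MeasureTheory

/-- `ρ(x) = sup{y ∈ T : y < x}`. -/
noncomputable def leftNbr (T : Set ℝ) (x : ℝ) : ℝ := sSup {y ∈ T | y < x}

/-- `σ(x) = inf{y ∈ T : y > x}`. -/
noncomputable def rightNbr (T : Set ℝ) (x : ℝ) : ℝ := sInf {y ∈ T | x < y}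

/-- The speed measure `μ = 1_T · m + Σ_{x ∈ T not two-sided dense} ((σ(x)-ρ(x))/2) δ_x`. -/
noncomputable def speedMeasure (T : Set ℝ) : Measure ℝ :=
  volume.restrict T +
    Measure.sum (fun x : {x : ℝ // x ∈ T ∧ (leftNbr T x ≠ x ∨ rightNbr T x ≠ x)} =>
      ENNReal.ofReal ((rightNbr T x - leftNbr T x) / 2) • Measure.dirac (x : ℝ))

/-!
The complement of `T` in `(u, v)` is the disjoint union of the gaps `(x, σ x)`, `x ∈ T`
right-scattered, and the atom `(σ x - ρ x) / 2` of `μ` at `x` is half the gap to its right plus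
half the gap to its left. Regrouping the atoms gap by gap, `μ` on `(u, v)` is Lebesgue measure on
`T ∩ (u, v)` plus, for each gap, half its length placed at each of its two endpoints, except that
the halves sitting at `u` and at `v` are missing. Since the trapezoidal rule integrates `a ↦ a`
exactly over each gap, the claim reduces to `∫_(u,v) a da = (v² - u²) / 2`.
-/

open Set Function
open scoped ENNReal

section DiracSum

variable {α : Type*} [MeasurableSpace α]

noncomputable def diracSum (w : α → ℝ≥0∞) : Measure α :=
  Measure.sum fun x => w x • Measure.dirac x

lemma smul_dirac_apply (c : ℝ≥0∞) (a : α) {s : Set α} (hs : MeasurableSet s) :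
    (c • Measure.dirac a) s = s.indicator (fun _ => c) a := by
  rw [Measure.smul_apply, Measure.dirac_apply' _ hs, smul_eq_mul]
  by_cases ha : a ∈ s <;> simp [ha]

lemma diracSum_apply (w : α → ℝ≥0∞) {s : Set α} (hs : MeasurableSet s) :
    diracSum w s = ∑' x, s.indicator w x := by
  rw [diracSum, Measure.sum_apply _ hs]
  exact tsum_congr fun x => smul_dirac_apply _ _ hs

lemma sum_subtype_smul_dirac (A : Set α) (w : α → ℝ≥0∞) :
    Measure.sum (fun x : A => w x • Measure.dirac (x : α)) = diracSum (A.indicator w) := by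
  ext s hs
  rw [Measure.sum_apply _ hs, diracSum_apply _ hs, indicator_indicator, inter_comm,
    ← indicator_indicator, ← tsum_subtype]
  exact tsum_congr fun x => smul_dirac_apply _ _ hs

lemma sum_subtype_smul_dirac_image {β : Type*} {A : Set β} {g : β → α} (hg : InjOn g A)
    (w : α → ℝ≥0∞) :
    Measure.sum (fun x : A => w (g x) • Measure.dirac (g x)) = diracSum ((g '' A).indicator w) := by
  ext s hs
  rw [← sum_subtype_smul_dirac, Measure.sum_apply _ hs, Measure.sum_apply _ hs]
  exact (tsum_image (fun y => (w y • Measure.dirac y) s) hg).symm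

lemma diracSum_restrict (w : α → ℝ≥0∞) {s : Set α} (hs : MeasurableSet s) :
    (diracSum w).restrict s = diracSum (s.indicator w) := by
  ext t ht
  rw [Measure.restrict_apply ht, diracSum_apply _ (ht.inter hs), diracSum_apply _ ht,
    indicator_indicator]

lemma diracSum_add (w₁ w₂ : α → ℝ≥0∞) : diracSum (w₁ + w₂) = diracSum w₁ + diracSum w₂ := by
  ext s hs
  rw [Measure.add_apply, diracSum_apply _ hs, diracSum_apply _ hs, diracSum_apply _ hs,
    ← ENNReal.tsum_add, indicator_add']
  rfl

lemma diracSum_indicator_singleton (w : α → ℝ≥0∞) (a : α) :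
    diracSum (({a} : Set α).indicator w) = w a • Measure.dirac a := by
  ext s hs
  rw [diracSum_apply _ hs, smul_dirac_apply _ _ hs, tsum_eq_single a fun x hx => by simp [hx]]
  by_cases ha : a ∈ s <;> simp [ha]

end DiracSum

lemma Continuous.integrable_of_ae_mem_Icc {E : Type*} [NormedAddCommGroup E] {f : ℝ → E}
    (hf : Continuous f) {ν : Measure ℝ} [IsFiniteMeasure ν] {a b : ℝ}
    (h : ∀ᵐ x ∂ν, x ∈ Icc a b) : Integrable f ν := by
  rw [← Measure.restrict_eq_self_of_ae_mem h]
  exact hf.integrableOn_Icc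

lemma indicator_sep_eq_indicator {β M : Type*} [Zero M] {A : Set β} {p : β → Prop} {f : β → M}
    (h : ∀ x ∈ A, ¬ p x → f x = 0) : {x ∈ A | p x}.indicator f = A.indicator f := by
  funext x
  by_cases hA : x ∈ A
  · by_cases hp : p x
    · rw [indicator_of_mem hA, indicator_of_mem (show x ∈ {x ∈ A | p x} from ⟨hA, hp⟩)]
    · rw [indicator_of_mem hA, h x hA hp, indicator_of_notMem fun hx => hp hx.2]
  · rw [indicator_of_notMem hA, indicator_of_notMem fun hx => hA hx.1]

section Neighbours

variable {T : Set ℝ} {x y z : ℝ}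

lemma le_rightNbr (hz : z ∈ T) (hxz : x < z) : x ≤ rightNbr T x :=
  le_csInf ⟨z, hz, hxz⟩ fun _ hy => hy.2.le

lemma rightNbr_le (hy : y ∈ T) (hxy : x < y) : rightNbr T x ≤ y :=
  csInf_le ⟨x, fun _ hz => hz.2.le⟩ ⟨hy, hxy⟩

lemma leftNbr_le (hz : z ∈ T) (hzx : z < x) : leftNbr T x ≤ x :=
  csSup_le ⟨z, hz, hzx⟩ fun _ hy => hy.2.le

lemma le_leftNbr (hy : y ∈ T) (hyx : y < x) : y ≤ leftNbr T x :=
  le_csSup ⟨x, fun _ hz => hz.2.le⟩ ⟨hy, hyx⟩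

lemma rightNbr_mem (hT : IsClosed T) (hz : z ∈ T) (hxz : x < z) : rightNbr T x ∈ T :=
  hT.closure_subset_iff.2 (fun _ hy => hy.1)
    (csInf_mem_closure ⟨z, hz, hxz⟩ ⟨x, fun _ hy => hy.2.le⟩)

lemma leftNbr_mem (hT : IsClosed T) (hz : z ∈ T) (hzx : z < x) : leftNbr T x ∈ T :=
  hT.closure_subset_iff.2 (fun _ hy => hy.1)
    (csSup_mem_closure ⟨z, hz, hzx⟩ ⟨x, fun _ hy => hy.2.le⟩)

lemma notMem_of_mem_Ioo_rightNbr (hy : y ∈ Ioo x (rightNbr T x)) : y ∉ T :=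
  fun hyT => (rightNbr_le hyT hy.1).not_gt hy.2

lemma leftNbr_rightNbr (hx : x ∈ T) (hxσ : x < rightNbr T x) :
    leftNbr T (rightNbr T x) = x :=
  le_antisymm (csSup_le ⟨x, hx, hxσ⟩ fun _ hy => not_lt.1 fun hxy =>
    (rightNbr_le hy.1 hxy).not_gt hy.2) (le_leftNbr hx hxσ)

lemma rightNbr_leftNbr (hy : y ∈ T) (hρy : leftNbr T y < y) :
    rightNbr T (leftNbr T y) = y :=
  le_antisymm (rightNbr_le hy hρy) (le_csInf ⟨y, hy, hρy⟩ fun _ hz => not_lt.1 fun hzy =>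
    (le_leftNbr hz.1 hzy).not_gt hz.2)

lemma pairwiseDisjoint_Ioo_rightNbr : T.PairwiseDisjoint fun x => Ioo x (rightNbr T x) := by
  have key : ∀ x ∈ T, ∀ y ∈ T, x < y →
      Disjoint (Ioo x (rightNbr T x)) (Ioo y (rightNbr T y)) := fun x _ y hy hxy =>
    (Ioc_disjoint_Ioc_of_le (rightNbr_le hy hxy)).mono Ioo_subset_Ioc_self Ioo_subset_Ioc_self
  intro x hx y hy hne
  rcases hne.lt_or_gt with h | h
  · exact key x hx y hy h
  · exact (key y hy x hx h).symm

end Neighbours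

def gapStarts (T : Set ℝ) (u v : ℝ) : Set ℝ := {x ∈ T ∩ Ico u v | x < rightNbr T x}

noncomputable def halfGapRight (T : Set ℝ) (x : ℝ) : ℝ≥0∞ :=
  ENNReal.ofReal ((rightNbr T x - x) / 2)

noncomputable def halfGapLeft (T : Set ℝ) (x : ℝ) : ℝ≥0∞ :=
  ENNReal.ofReal ((x - leftNbr T x) / 2)

noncomputable def gapMeasure (T : Set ℝ) (u v : ℝ) : Measure ℝ :=
  Measure.sum fun x : gapStarts T u v =>
    halfGapRight T x • (Measure.dirac (x : ℝ) + Measure.dirac (rightNbr T x))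

section Gaps

variable {T : Set ℝ} {u v : ℝ}

lemma pairwise_disjoint_gaps :
    Pairwise (Disjoint on fun x : gapStarts T u v => Ioo (x : ℝ) (rightNbr T x)) :=
  fun x y hxy => pairwiseDisjoint_Ioo_rightNbr x.2.1.1 y.2.1.1 (Subtype.coe_injective.ne hxy)

lemma gapStarts_countable : (gapStarts T u v).Countable :=
  (pairwiseDisjoint_Ioo_rightNbr.subset fun _ hx => hx.1.1).countable_of_Ioo fun _ hx => hx.2

lemma rightNbr_le_of_mem_gapStarts (hv : v ∈ T) {x : ℝ} (hx : x ∈ gapStarts T u v) :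
    rightNbr T x ≤ v :=
  rightNbr_le hv hx.1.2.2

lemma iUnion_gapStarts (hT : IsClosed T) (hu : u ∈ T) (hv : v ∈ T) :
    ⋃ x : gapStarts T u v, Ioo (x : ℝ) (rightNbr T x) = Ioo u v \ T := by
  ext t
  constructor
  · rintro ⟨_, ⟨x, rfl⟩, ht⟩
    exact ⟨⟨x.2.1.2.1.trans_lt ht.1, ht.2.trans_le (rightNbr_le_of_mem_gapStarts hv x.2)⟩,
      notMem_of_mem_Ioo_rightNbr ht⟩
  · rintro ⟨⟨hut, htv⟩, htT⟩
    -- `t` lies in the gap that starts at `ρ t`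
    set x := leftNbr T t
    have hxT : x ∈ T := leftNbr_mem hT hu hut
    have hxt : x < t := (leftNbr_le hu hut).lt_of_ne fun h => htT (h ▸ hxT)
    have htσ : t ≤ rightNbr T x := le_csInf ⟨v, hv, hxt.trans htv⟩ fun z hz =>
      not_lt.1 fun hzt => (le_leftNbr hz.1 hzt).not_gt hz.2
    have htσ' : t < rightNbr T x :=
      htσ.lt_of_ne fun h => htT (h ▸ rightNbr_mem hT hv (hxt.trans htv))
    exact mem_iUnion.2 ⟨⟨x, ⟨hxT, le_leftNbr hu hut, hxt.trans htv⟩, hxt.trans htσ'⟩, hxt, htσ'⟩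

lemma injOn_rightNbr_gapStarts : InjOn (rightNbr T) (gapStarts T u v) :=
  LeftInvOn.injOn (f₁' := leftNbr T) fun _ hx => leftNbr_rightNbr hx.1.1 hx.2

lemma image_rightNbr_gapStarts (hT : IsClosed T) (hu : u ∈ T) (hv : v ∈ T) :
    rightNbr T '' gapStarts T u v = {y ∈ T ∩ Ioc u v | leftNbr T y < y} := by
  ext y
  constructor
  · rintro ⟨x, hx, rfl⟩
    refine ⟨⟨rightNbr_mem hT hv hx.1.2.2, hx.1.2.1.trans_lt hx.2,
      rightNbr_le_of_mem_gapStarts hv hx⟩, ?_⟩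
    rw [leftNbr_rightNbr hx.1.1 hx.2]
    exact hx.2
  · rintro ⟨⟨hyT, huy, hyv⟩, hρy⟩
    refine ⟨leftNbr T y, ⟨⟨leftNbr_mem hT hu huy, le_leftNbr hu huy, hρy.trans_le hyv⟩, ?_⟩,
      rightNbr_leftNbr hyT hρy⟩
    rw [rightNbr_leftNbr hyT hρy]
    exact hρy

lemma indicator_gapStarts_halfGapRight :
    (gapStarts T u v).indicator (halfGapRight T) = (T ∩ Ico u v).indicator (halfGapRight T) :=
  indicator_sep_eq_indicator fun _ _ hx => ENNReal.ofReal_eq_zero.2 (by linarith [not_lt.1 hx])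

lemma indicator_image_halfGapLeft (hT : IsClosed T) (hu : u ∈ T) (hv : v ∈ T) :
    (rightNbr T '' gapStarts T u v).indicator (halfGapLeft T)
      = (T ∩ Ioc u v).indicator (halfGapLeft T) := by
  rw [image_rightNbr_gapStarts hT hu hv]
  exact indicator_sep_eq_indicator fun _ _ hy => ENNReal.ofReal_eq_zero.2 (by linarith [not_lt.1 hy])

lemma gapMeasure_eq (hT : IsClosed T) (hu : u ∈ T) (hv : v ∈ T) :
    gapMeasure T u v = diracSum ((T ∩ Ico u v).indicator (halfGapRight T))
      + diracSum ((T ∩ Ioc u v).indicator (halfGapLeft T)) := by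
  rw [← indicator_gapStarts_halfGapRight, ← indicator_image_halfGapLeft hT hu hv,
    ← sum_subtype_smul_dirac, ← sum_subtype_smul_dirac_image injOn_rightNbr_gapStarts,
    Measure.sum_add_sum, gapMeasure]
  congr 1
  funext x
  rw [smul_add, halfGapLeft, leftNbr_rightNbr x.2.1.1 x.2.2, halfGapRight]

lemma gapMeasure_univ (hT : IsClosed T) (hu : u ∈ T) (hv : v ∈ T) :
    gapMeasure T u v univ = volume (Ioo u v \ T) := by
  have : Countable (gapStarts T u v) := gapStarts_countable.to_subtype
  rw [gapMeasure, Measure.sum_apply _ MeasurableSet.univ, ← iUnion_gapStarts hT hu hv,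
    measure_iUnion pairwise_disjoint_gaps fun _ => measurableSet_Ioo]
  refine tsum_congr fun x => ?_
  rw [Measure.smul_apply, Measure.add_apply, measure_univ, measure_univ, one_add_one_eq_two, smul_eq_mul,
    halfGapRight, ← ENNReal.ofReal_ofNat 2, ← ENNReal.ofReal_mul (by linarith [x.2.2]),
    Real.volume_Ioo]
  congr 1
  ring

lemma ae_mem_Icc_gapMeasure (hv : v ∈ T) : ∀ᵐ x ∂gapMeasure T u v, x ∈ Icc u v := by
  refine (Measure.ae_sum_iff' measurableSet_Icc).2 fun x =>
    Measure.ae_smul_measure (ae_add_measure_iff.2 ⟨?_, ?_⟩) _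
  · exact (ae_dirac_iff measurableSet_Icc).2 ⟨x.2.1.2.1, x.2.1.2.2.le⟩
  · exact (ae_dirac_iff measurableSet_Icc).2
      ⟨x.2.1.2.1.trans x.2.2.le, rightNbr_le_of_mem_gapStarts hv x.2⟩

lemma integrable_id_gapMeasure (hT : IsClosed T) (hu : u ∈ T) (hv : v ∈ T) :
    Integrable (fun a => a) (gapMeasure T u v) := by
  have : IsFiniteMeasure (gapMeasure T u v) := ⟨by
    rw [gapMeasure_univ hT hu hv]
    exact (measure_mono sdiff_subset).trans_lt measure_Ioo_lt_top⟩
  exact continuous_id.integrable_of_ae_mem_Icc (ae_mem_Icc_gapMeasure hv)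

lemma integral_id_gapMeasure (hT : IsClosed T) (hu : u ∈ T) (hv : v ∈ T) :
    ∫ a, a ∂gapMeasure T u v = ∫ a in Ioo u v \ T, a := by
  have : Countable (gapStarts T u v) := gapStarts_countable.to_subtype
  have hint : IntegrableOn (fun a => a) (⋃ x : gapStarts T u v, Ioo (x : ℝ) (rightNbr T x)) := by
    rw [iUnion_gapStarts hT hu hv]
    exact continuous_id.integrableOn_Icc.mono_set (sdiff_subset.trans Ioo_subset_Icc_self)
  rw [gapMeasure, integral_sum_measure (integrable_id_gapMeasure hT hu hv),
    ← iUnion_gapStarts hT hu hv, integral_iUnion (fun _ => measurableSet_Ioo) pairwise_disjoint_gaps hint]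
  refine tsum_congr fun x => ?_
  have hle : (x : ℝ) ≤ rightNbr T x := x.2.2.le
  rw [integral_smul_measure, integral_add_measure (integrable_dirac (by simp))
      (integrable_dirac (by simp)), integral_dirac, integral_dirac, halfGapRight,
    ENNReal.toReal_ofReal (by linarith), ← integral_Ioc_eq_integral_Ioo,
    ← intervalIntegral.integral_of_le hle, integral_id, smul_eq_mul]
  ring

end Gaps

section SpeedMeasure

variable {T : Set ℝ} {u v : ℝ}

lemma speedMeasure_restrict_Ioo (hu : u ∈ T) (hv : v ∈ T) :
    (speedMeasure T).restrict (Ioo u v) = volume.restrict (Ioo u v ∩ T)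
      + diracSum ((T ∩ Ioo u v).indicator (halfGapRight T + halfGapLeft T)) := by
  have hatoms : Measure.sum (fun x : {x : ℝ // x ∈ T ∧ (leftNbr T x ≠ x ∨ rightNbr T x ≠ x)} =>
        ENNReal.ofReal ((rightNbr T x - leftNbr T x) / 2) • Measure.dirac (x : ℝ))
      = diracSum ({x | x ∈ T ∧ (leftNbr T x ≠ x ∨ rightNbr T x ≠ x)}.indicator
          fun x => ENNReal.ofReal ((rightNbr T x - leftNbr T x) / 2)) :=
    sum_subtype_smul_dirac {x | x ∈ T ∧ (leftNbr T x ≠ x ∨ rightNbr T x ≠ x)}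
      fun x => ENNReal.ofReal ((rightNbr T x - leftNbr T x) / 2)
  rw [speedMeasure, Measure.restrict_add, Measure.restrict_restrict measurableSet_Ioo, hatoms,
    diracSum_restrict _ measurableSet_Ioo, indicator_indicator]
  congr 2
  funext x
  by_cases hx : x ∈ T ∩ Ioo u v
  · have hρ : leftNbr T x ≤ x := leftNbr_le hu hx.2.1
    have hσ : x ≤ rightNbr T x := le_rightNbr hv hx.2.2
    have hw : ENNReal.ofReal ((rightNbr T x - leftNbr T x) / 2)
        = (halfGapRight T + halfGapLeft T) x := by
      rw [Pi.add_apply, halfGapRight, halfGapLeft, ← ENNReal.ofReal_add (by linarith)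
        (by linarith)]
      ring_nf
    rw [indicator_of_mem hx, ← hw]
    by_cases hJ : leftNbr T x ≠ x ∨ rightNbr T x ≠ x
    · exact indicator_of_mem (by exact ⟨hx.2, hx.1, hJ⟩) _
    · rw [not_or, not_not, not_not] at hJ
      rw [indicator_of_notMem fun h => h.2.2.elim (· hJ.1) (· hJ.2), hJ.1, hJ.2]
      simp
  · rw [indicator_of_notMem hx, indicator_of_notMem fun h => hx ⟨h.2.1, h.1⟩]

lemma speedMeasure_restrict_Ioo_add_endpoints (hT : IsClosed T) (hu : u ∈ T) (hv : v ∈ T)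
    (huv : u < v) :
    (speedMeasure T).restrict (Ioo u v) + halfGapRight T u • Measure.dirac u
      + halfGapLeft T v • Measure.dirac v = volume.restrict (Ioo u v ∩ T) + gapMeasure T u v := by
  have hIco : (T ∩ Ico u v).indicator (halfGapRight T)
      = (T ∩ Ioo u v).indicator (halfGapRight T) + ({u} : Set ℝ).indicator (halfGapRight T) := by
    rw [← Ioo_insert_left huv, inter_insert_of_mem hu, insert_eq, union_comm,
      indicator_union_of_disjoint (disjoint_singleton_right.2 fun h => h.2.1.false)]
    rfl
  have hIoc : (T ∩ Ioc u v).indicator (halfGapLeft T)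
      = (T ∩ Ioo u v).indicator (halfGapLeft T) + ({v} : Set ℝ).indicator (halfGapLeft T) := by
    rw [← Ioo_insert_right huv, inter_insert_of_mem hv, insert_eq, union_comm,
      indicator_union_of_disjoint (disjoint_singleton_right.2 fun h => h.2.2.false)]
    rfl
  rw [speedMeasure_restrict_Ioo hu hv, gapMeasure_eq hT hu hv, hIco, hIoc, indicator_add',
    diracSum_add, diracSum_add, diracSum_add, diracSum_indicator_singleton,
    diracSum_indicator_singleton]
  abel

lemma integral_speedMeasure_Ioo_add_endpoints (hT : IsClosed T) (hu : u ∈ T) (hv : v ∈ T)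
    (huv : u < v) :
    (∫ a in Ioo u v, a ∂speedMeasure T) + (halfGapRight T u).toReal * u
      + (halfGapLeft T v).toReal * v = (v ^ 2 - u ^ 2) / 2 := by
  have hIoo : IntegrableOn (fun a : ℝ => a) (Ioo u v) :=
    continuous_id.integrableOn_Icc.mono_set Ioo_subset_Icc_self
  have key := speedMeasure_restrict_Ioo_add_endpoints hT hu hv huv
  have hint : Integrable (fun a => a) (volume.restrict (Ioo u v ∩ T) + gapMeasure T u v) :=
    Integrable.add_measure (hIoo.mono_set inter_subset_left) (integrable_id_gapMeasure hT hu hv)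
  have hint' := key ▸ hint
  calc _ = ∫ a, a ∂((speedMeasure T).restrict (Ioo u v) + halfGapRight T u • Measure.dirac u
        + halfGapLeft T v • Measure.dirac v) := by
        rw [integral_add_measure hint'.left_of_add_measure hint'.right_of_add_measure,
          integral_add_measure hint'.left_of_add_measure.left_of_add_measure
            hint'.left_of_add_measure.right_of_add_measure,
          integral_smul_measure, integral_smul_measure, integral_dirac, integral_dirac,
          smul_eq_mul, smul_eq_mul]
    _ = (∫ a in Ioo u v ∩ T, a) + ∫ a in Ioo u v \ T, a := by
        rw [key, integral_add_measure hint.left_of_add_measure hint.right_of_add_measure,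
          integral_id_gapMeasure hT hu hv]
    _ = (v ^ 2 - u ^ 2) / 2 := by
        rw [integral_inter_add_sdiff hT.measurableSet hIoo, ← integral_Ioc_eq_integral_Ioo,
          ← intervalIntegral.integral_of_le huv.le, integral_id]

end SpeedMeasure

/-- for `u, v ∈ T` with `u < v`,
`∫_{(u,v)} a μ(da) = v²/2 - u²/2 - u (σ(u)-u)/2 - v (v-ρ(v))/2`. -/
theorem speedMeasure_integral_id (T : Set ℝ) (hT : IsClosed T) (u v : ℝ) (hu : u ∈ T)
    (hv : v ∈ T) (huv : u < v) :
    ∫ a in Set.Ioo u v, a ∂(speedMeasure T)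
      = v ^ 2 / 2 - u ^ 2 / 2 - u * (rightNbr T u - u) / 2 - v * (v - leftNbr T v) / 2 := by
  have hσ : u ≤ rightNbr T u := le_rightNbr hv huv
  have hρ : leftNbr T v ≤ v := leftNbr_le hu huv
  have h := integral_speedMeasure_Ioo_add_endpoints hT hu hv huv
  rw [halfGapRight, halfGapLeft, ENNReal.toReal_ofReal (by linarith),
    ENNReal.toReal_ofReal (by linarith)] at h
  linarith
end

section
/- For fixed t > 0, x ∈ ℝ, and each integer k ≥ 0, lim_{q→1⁺} Σ_{m=0, m≡k mod 2}^{k} (q^{−1}(q−1)²(1+q))^{−(k−m)/2} ((q;q)_k/(q;q)_m) q^{(m²−k²)/4} t^{(k−m)/2} x^m / ((k−m)/2)! = Σ_{m=0, m≡k mod 2}^{k} (k!/(m!(k−m)!)) (1/2)^{(k−m)/2} ((k−m)!/((k−m)/2)!) t^{(k−m)/2} x^m, which equals the k-th moment of a Gaussian random variable with mean x and variance t. -/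
open Filter

/-!
With the `q`-factorial `[n]_q! = ∏_{i<n} (1 + q + ⋯ + q^i)` one has `(q;q)_n = (1 - q)^n [n]_q!`,
and `[n]_q!` is continuous in `q` with `[n]_1! = n!`. In a summand with `k - j = 2n` the factor
`(1 - q)^{2n}` of `(q;q)_k / (q;q)_j` cancels against `(q - 1)^{2n}` in
`(q⁻¹ (q - 1)² (1 + q))^{-n}`, leaving a function continuous at `q = 1` whose value there is the
corresponding summand on the right.

That sum is `∑_j C(k,j) x^j E[(√t Z)^{k-j}]` for a standard Gaussian `Z`, by the binomial
theorem, and `E[Z^{2n}] = (2n - 1)!!`, `E[Z^{2n+1}] = 0` follow from the recursion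
`E[Z^{n+2}] = (n + 1) E[Z^n]` given by integration by parts against the density.
-/

open Topology MeasureTheory ProbabilityTheory Finset Real
open scoped Nat NNReal

section QAnalogues

variable {R : Type*}

def qPochhammer [CommRing R] (n : ℕ) (q : R) : R := ∏ i ∈ range n, (1 - q ^ (i + 1))

def qFactorial [CommSemiring R] (n : ℕ) (q : R) : R :=
  ∏ i ∈ range n, ∑ j ∈ range (i + 1), q ^ j

theorem qPochhammer_eq_one_sub_pow_mul_qFactorial [CommRing R] (n : ℕ) (q : R) :
    qPochhammer n q = (1 - q) ^ n * qFactorial n q := by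
  simp_rw [qPochhammer, qFactorial, ← mul_neg_geom_sum, prod_mul_distrib, prod_const, card_range]

theorem qFactorial_one [CommSemiring R] (n : ℕ) : qFactorial n (1 : R) = n ! := by
  rw [← prod_range_add_one_eq_factorial, Nat.cast_prod]
  simp [qFactorial]

theorem continuous_qFactorial [CommSemiring R] [TopologicalSpace R] [IsTopologicalSemiring R]
    (n : ℕ) : Continuous (qFactorial (R := R) n) := by
  unfold qFactorial
  fun_prop

end QAnalogues

theorem tendsto_qPochhammer_div (j n : ℕ) :
    Tendsto (fun q : ℝ => (q⁻¹ * (q - 1) ^ 2 * (1 + q)) ^ (-(n : ℤ)) *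
        (qPochhammer (j + 2 * n) q / qPochhammer j q))
      (𝓝[≠] 1) (𝓝 (((j + 2 * n)! : ℝ) / (j ! * 2 ^ n))) := by
  set g : ℝ → ℝ := fun q => (q / (1 + q)) ^ n * (qFactorial (j + 2 * n) q / qFactorial j q)
  have hF_one : qFactorial j (1 : ℝ) ≠ 0 := by rw [qFactorial_one]; positivity
  have hg : ContinuousAt g 1 :=
    ((continuousAt_id.div (by fun_prop) (by norm_num)).pow n).mul
      ((continuous_qFactorial _).continuousAt.div (continuous_qFactorial _).continuousAt hF_one)
  have hg_one : g 1 = (j + 2 * n)! / (j ! * 2 ^ n) := by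
    simp only [g, qFactorial_one]
    field_simp
    rw [← mul_pow]
    norm_num
  rw [← hg_one]
  refine (hg.tendsto.mono_left nhdsWithin_le_nhds).congr' ?_
  have hF : ∀ᶠ q in 𝓝 (1 : ℝ), qFactorial j q ≠ 0 :=
    (continuous_qFactorial j).continuousAt.eventually_ne hF_one
  filter_upwards [self_mem_nhdsWithin, nhdsWithin_le_nhds hF,
    nhdsWithin_le_nhds (eventually_ne_nhds one_ne_zero),
    nhdsWithin_le_nhds (eventually_ne_nhds (by norm_num : (1 : ℝ) ≠ -1))] with q hq1 hFq hq0 hq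
  have h1 : 1 - q ≠ 0 := sub_ne_zero.2 (Ne.symm hq1)
  have h2 : 1 + q ≠ 0 := fun h => hq (by linear_combination h)
  simp only [g, qPochhammer_eq_one_sub_pow_mul_qFactorial, zpow_neg, zpow_natCast, pow_add,
    pow_mul, show (q - 1) ^ 2 = (1 - q) ^ 2 by ring, mul_pow, inv_pow, div_pow]
  field_simp

theorem tendsto_qMoment_summand (t x : ℝ) (j n : ℕ) (e : ℤ) :
    Tendsto (fun q : ℝ => (q⁻¹ * (q - 1) ^ 2 * (1 + q)) ^ (-(n : ℤ)) *
        (qPochhammer (j + 2 * n) q / qPochhammer j q) * q ^ e * t ^ n / n ! * x ^ j)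
      (𝓝[≠] 1)
      (𝓝 ((j + 2 * n)! / (j ! * (2 * n)!) * (1 / 2) ^ n * ((2 * n)! / n !) * t ^ n *
        x ^ j)) := by
  have hpow : Tendsto (fun q : ℝ => q ^ e) (𝓝[≠] 1) (𝓝 1) := by
    simpa using (continuousAt_zpow₀ (1 : ℝ) e (Or.inl one_ne_zero)).tendsto.mono_left
      nhdsWithin_le_nhds
  convert (((tendsto_qPochhammer_div j n).mul hpow).mul_const (t ^ n)
    |>.div_const (n ! : ℝ)).mul_const (x ^ j) using 2
  simp only [one_div, inv_pow]
  field_simp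

theorem integrable_pow_mul_exp_neg_mul_sq {b : ℝ} (hb : 0 < b) (n : ℕ) :
    Integrable fun x : ℝ => x ^ n * exp (-b * x ^ 2) := by
  simpa [rpow_natCast] using
    integrable_rpow_mul_exp_neg_mul_sq hb (s := n) (by linarith [n.cast_nonneg (α := ℝ)])

theorem integral_pow_add_two_mul_exp_neg_mul_sq {b : ℝ} (hb : 0 < b) (n : ℕ) :
    ∫ x : ℝ, x ^ (n + 2) * exp (-b * x ^ 2) =
      (n + 1) / (2 * b) * ∫ x : ℝ, x ^ n * exp (-b * x ^ 2) := by
  have hu (x : ℝ) : HasDerivAt (fun y : ℝ => y ^ (n + 1)) ((n + 1) * x ^ n) x := by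
    simpa using hasDerivAt_pow (n + 1) x
  have hv (x : ℝ) : HasDerivAt (fun y : ℝ => exp (-b * y ^ 2))
      (-(2 * b) * (x * exp (-b * x ^ 2))) x := by
    convert ((hasDerivAt_pow 2 x).const_mul (-b)).exp using 1
    push_cast; ring
  have parts := integral_mul_deriv_eq_deriv_mul_of_integrable (fun x _ => hu x) (fun x _ => hv x)
    (((integrable_pow_mul_exp_neg_mul_sq hb (n + 2)).const_mul (-(2 * b))).congr
      (ae_of_all _ fun x => by simp only [Pi.mul_apply]; ring))
    (((integrable_pow_mul_exp_neg_mul_sq hb n).const_mul (n + 1)).congr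
      (ae_of_all _ fun x => by simp only [Pi.mul_apply]; ring))
    (integrable_pow_mul_exp_neg_mul_sq hb (n + 1))
  simp only [show ∀ x : ℝ, x ^ (n + 1) * (-(2 * b) * (x * exp (-b * x ^ 2))) =
      -(2 * b) * (x ^ (n + 2) * exp (-b * x ^ 2)) from fun x => by ring,
    mul_assoc ((n : ℝ) + 1), integral_const_mul] at parts
  rw [div_mul_eq_mul_div, eq_div_iff (by positivity)]
  linarith

theorem integral_pow_mul_exp_neg_mul_sq_of_odd (b : ℝ) {n : ℕ} (hn : Odd n) :
    ∫ x : ℝ, x ^ n * exp (-b * x ^ 2) = 0 := by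
  have h := integral_neg_eq_self (fun x : ℝ => x ^ n * exp (-b * x ^ 2)) volume
  rw [show (fun x : ℝ => (-x) ^ n * exp (-b * (-x) ^ 2)) = fun x => -(x ^ n * exp (-b * x ^ 2))
    from funext fun x => by rw [hn.neg_pow, neg_sq, neg_mul], integral_neg] at h
  linarith

theorem integral_gaussianReal_zero_eq_integral_mul_exp {v : ℝ≥0} (hv : v ≠ 0) (f : ℝ → ℝ) :
    ∫ x, f x ∂gaussianReal 0 v =
      (√(2 * π * v))⁻¹ * ∫ x, f x * exp (-(2 * (v : ℝ))⁻¹ * x ^ 2) := by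
  rw [integral_gaussianReal_eq_integral_smul hv, ← integral_const_mul]
  congr 1 with x
  simp only [gaussianPDFReal, sub_zero, smul_eq_mul]
  ring_nf

theorem integral_pow_add_two_gaussianReal_zero (v : ℝ≥0) (n : ℕ) :
    ∫ x, x ^ (n + 2) ∂gaussianReal 0 v = (n + 1) * v * ∫ x, x ^ n ∂gaussianReal 0 v := by
  rcases eq_or_ne v 0 with rfl | hv
  · simp [gaussianReal_zero_var]
  rw [integral_gaussianReal_zero_eq_integral_mul_exp hv,
    integral_gaussianReal_zero_eq_integral_mul_exp hv,
    integral_pow_add_two_mul_exp_neg_mul_sq (by positivity)]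
  field_simp

theorem integral_pow_gaussianReal_zero_of_odd (v : ℝ≥0) {n : ℕ} (hn : Odd n) :
    ∫ x, x ^ n ∂gaussianReal 0 v = 0 := by
  rcases eq_or_ne v 0 with rfl | hv
  · simp [gaussianReal_zero_var, hn.pos.ne']
  rw [integral_gaussianReal_zero_eq_integral_mul_exp hv,
    integral_pow_mul_exp_neg_mul_sq_of_odd _ hn, mul_zero]

theorem integral_pow_two_mul_gaussianReal_zero (v : ℝ≥0) (n : ℕ) :
    ∫ x, x ^ (2 * n) ∂gaussianReal 0 v = (2 * n - 1)‼ * (v : ℝ) ^ n := by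
  induction n with
  | zero => simp
  | succ n ih =>
    rw [mul_add_one, integral_pow_add_two_gaussianReal_zero, ih,
      show 2 * n + 2 - 1 = 2 * n + 1 by omega, Nat.doubleFactorial_add_one]
    push_cast
    ring

theorem integrable_pow_gaussianReal (μ : ℝ) (v : ℝ≥0) (n : ℕ) :
    Integrable (fun x => x ^ n) (gaussianReal μ v) := by
  have : MemLp id n (gaussianReal μ v) := by simpa using memLp_id_gaussianReal (n : ℝ≥0)
  exact this.integrable_norm_pow'.mono' (by fun_prop) (ae_of_all _ fun x => by simp)

theorem integral_pow_gaussianReal (μ : ℝ) (v : ℝ≥0) (k : ℕ) :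
    ∫ y, y ^ k ∂gaussianReal μ v =
      ∑ j ∈ range (k + 1), k.choose j * μ ^ j * ∫ z, z ^ (k - j) ∂gaussianReal 0 v := by
  have hmap : gaussianReal μ v = (gaussianReal 0 v).map (μ + ·) := by
    rw [gaussianReal_map_const_add, zero_add]
  simp_rw [hmap, integral_map (measurable_const_add μ).aemeasurable
    (by fun_prop : AEStronglyMeasurable (fun y : ℝ => y ^ k) _), add_pow]
  rw [integral_finsetSum _ fun j _ =>
    ((integrable_pow_gaussianReal 0 v (k - j)).const_mul _).mul_const _]
  refine sum_congr rfl fun j _ => ?_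
  rw [integral_mul_const, integral_const_mul]
  ring

theorem Nat.factorial_two_mul_eq_mul_doubleFactorial (n : ℕ) :
    (2 * n)! = 2 ^ n * n ! * (2 * n - 1)‼ := by
  cases n with
  | zero => rfl
  | succ n =>
    rw [show 2 * (n + 1) = 2 * n + 1 + 1 by ring, Nat.factorial_eq_mul_doubleFactorial,
      show 2 * n + 1 + 1 = 2 * (n + 1) by ring, Nat.doubleFactorial_two_mul,
      show 2 * (n + 1) - 1 = 2 * n + 1 by omega]

/-- as `q → 1⁺`, the `k`-th moment of Brownian motion on `T_q` converges to
the `k`-th moment of a Gaussian with mean `x` and variance `t`: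
`lim_{q→1⁺} Σ_{j≡k(2)} c_q^{-(k-j)/2} ((q;q)_k/(q;q)_j) q^{(j²-k²)/4} t^{(k-j)/2} x^j/((k-j)/2)!
= Σ_{j≡k(2)} (k!/(j!(k-j)!)) (1/2)^{(k-j)/2} ((k-j)!/((k-j)/2)!) t^{(k-j)/2} x^j`,
and the latter equals the `k`-th moment of the Gaussian with mean `x`, variance `t`. -/
theorem moments_tendsto_gaussian (t : ℝ) (ht : 0 < t) (x : ℝ) (k : ℕ) :
    Tendsto (fun q : ℝ => ∑ j ∈ Finset.range (k + 1),
        if (k - j) % 2 = 0 then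
          (q⁻¹ * (q - 1) ^ 2 * (1 + q)) ^ (-(((k : ℤ) - j) / 2)) *
            ((∏ i ∈ Finset.range k, (1 - q ^ (i + 1))) /
              (∏ i ∈ Finset.range j, (1 - q ^ (i + 1)))) *
            q ^ (((j : ℤ) ^ 2 - (k : ℤ) ^ 2) / 4) *
            t ^ ((k - j) / 2) / (Nat.factorial ((k - j) / 2)) * x ^ j
        else 0)
      (nhdsWithin 1 (Set.Ioi 1))
      (nhds (∑ j ∈ Finset.range (k + 1),
        if (k - j) % 2 = 0 then
          ((Nat.factorial k : ℝ) / (Nat.factorial j * Nat.factorial (k - j))) *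
            (1 / 2) ^ ((k - j) / 2) *
            ((Nat.factorial (k - j) : ℝ) / Nat.factorial ((k - j) / 2)) *
            t ^ ((k - j) / 2) * x ^ j
        else 0))
    ∧ (∑ j ∈ Finset.range (k + 1),
        if (k - j) % 2 = 0 then
          ((Nat.factorial k : ℝ) / (Nat.factorial j * Nat.factorial (k - j))) *
            (1 / 2) ^ ((k - j) / 2) *
            ((Nat.factorial (k - j) : ℝ) / Nat.factorial ((k - j) / 2)) *
            t ^ ((k - j) / 2) * x ^ j
        else 0)
      = ∫ y, y ^ k ∂(ProbabilityTheory.gaussianReal x (Real.toNNReal t)) := by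
  refine ⟨tendsto_finsetSum _ fun j hj => ?_, ?_⟩
  · by_cases hkj : (k - j) % 2 = 0
    · obtain ⟨n, rfl⟩ : ∃ n, k = j + 2 * n := ⟨(k - j) / 2, by grind⟩
      have hn : -((((j + 2 * n : ℕ) : ℤ) - j) / 2) = -n := by push_cast; omega
      simp only [hn, Nat.add_sub_cancel_left, Nat.mul_mod_right, Nat.mul_div_cancel_left n two_pos,
        ↓reduceIte]
      exact (tendsto_qMoment_summand t x j n _).mono_left (nhdsGT_le_nhdsNE 1)
    · simp only [hkj]
      exact tendsto_const_nhds
  · rw [integral_pow_gaussianReal]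
    refine sum_congr rfl fun j hj => ?_
    by_cases hkj : (k - j) % 2 = 0
    · obtain ⟨n, rfl⟩ : ∃ n, k = j + 2 * n := ⟨(k - j) / 2, by grind⟩
      simp only [Nat.add_sub_cancel_left, Nat.mul_mod_right, ↓reduceIte,
        Nat.mul_div_cancel_left n two_pos, integral_pow_two_mul_gaussianReal_zero,
        Real.coe_toNNReal _ ht.le, Nat.cast_choose ℝ (Nat.le_add_right j (2 * n)),
        Nat.factorial_two_mul_eq_mul_doubleFactorial]
      push_cast
      field_simp
      rw [← mul_pow]
      norm_num
    · rw [if_neg hkj, integral_pow_gaussianReal_zero_of_odd _ (Nat.odd_iff.2 (by omega)), mul_zero]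
end

section
/- Let q > 1, let N be as above with P{N = k} ∝ q^{−k}/(q^{−2};q^{−2})_k, independent of i.i.d. rate-1 exponentials T_i. Then E[exp(−λ q^{2N−1} Σ_{i=0}^∞ q^{−2i}T_i)] = ₁φ₁(0; −λ^{−1}q^{−1}; q^{−2}; −λ^{−1}q^{−2}) · e_{q^{−2}}(−λ/q) / e_{q^{−2}}(1/q). In particular, the Laplace transform H_{0,−∞}(λ) of the hitting time of 0 factorizes as a mixture over N of infinite convolutions of exponentials. -/
/-! Conditionally on `N = k`, the exponent is `λ q^(2k-1) S` with `S = Σ q^(-2i) T_i` a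
series of independent exponentials, so its Laplace transform is `1 / (-λ q^(2k-1); q^(-2))_∞`.
Peeling off `k` factors,
`(-λ q^(2k-1); q^(-2))_∞ = (-λ/q; q^(-2))_∞ (-λ⁻¹q⁻¹; q^(-2))_k λ^k q^(k²)`,
and with this the `k`-th term of the mixture over `N` is exactly the `k`-th term of the `₁φ₁`
series times `e_{q^(-2)}(-λ/q) / e_{q^(-2)}(1/q)`. -/

open MeasureTheory ProbabilityTheory

/-- The finite q-Pochhammer symbol `(z; p)_k`. -/
noncomputable def qPoch (z p : ℝ) (k : ℕ) : ℝ := ∏ j ∈ Finset.range k, (1 - z * p ^ j)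

/-- The infinite q-Pochhammer symbol `(z; p)_∞`. -/
noncomputable def qPochInf (z p : ℝ) : ℝ := ∏' j : ℕ, (1 - z * p ^ j)

/-- The q-exponential `e_p(z) = 1/(z;p)_∞`. -/
noncomputable def qExp (p z : ℝ) : ℝ := 1 / qPochInf z p

/-- `₁φ₁(0; b; p; z) = Σ_{k≥0} (-1)^k p^{k(k-1)/2} z^k / ((b;p)_k (p;p)_k)`. -/
noncomputable def phi11 (b p z : ℝ) : ℝ :=
  ∑' k : ℕ, ((-1) ^ k * p ^ (k * (k - 1) / 2) * z ^ k) / (qPoch b p k * qPoch p p k)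

open Real Filter Set Topology
open scoped ENNReal

section QPochhammer

variable {z p : ℝ}

lemma multipliable_qPochInf (hp : |p| < 1) : Multipliable fun j : ℕ => 1 - z * p ^ j := by
  simpa [sub_eq_add_neg] using Real.multipliable_one_add_of_summable
    ((summable_geometric_of_abs_lt_one hp).mul_left (-z))

lemma qPochInf_eq_one_sub_mul (hp : |p| < 1) : qPochInf z p = (1 - z) * qPochInf (z * p) p := by
  rw [qPochInf, tprod_eq_zero_mul' ?_]
  · simp [qPochInf, pow_succ', mul_assoc]
  · simpa [pow_succ', mul_assoc] using multipliable_qPochInf (z := z * p) hp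

lemma qPoch_succ (k : ℕ) : qPoch z p (k + 1) = qPoch z p k * (1 - z * p ^ k) :=
  Finset.prod_range_succ _ k

lemma one_sub_mul_pow_nonneg (hz : z ≤ 1) (hp₀ : 0 ≤ p) (hp₁ : p ≤ 1) (j : ℕ) :
    0 ≤ 1 - z * p ^ j := by
  have h₀ := pow_nonneg hp₀ j
  have h₁ := pow_le_one₀ hp₀ hp₁ (n := j)
  rcases le_total z 0 with h | h <;> nlinarith

lemma qPochInf_nonneg (hz : z ≤ 1) (hp₀ : 0 ≤ p) (hp₁ : p ≤ 1) : 0 ≤ qPochInf z p :=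
  tprod_nonneg (one_sub_mul_pow_nonneg hz hp₀ hp₁)

lemma qPoch_nonneg (hz : z ≤ 1) (hp₀ : 0 ≤ p) (hp₁ : p ≤ 1) (k : ℕ) : 0 ≤ qPoch z p k :=
  Finset.prod_nonneg fun j _ => one_sub_mul_pow_nonneg hz hp₀ hp₁ j

end QPochhammer

section QIdentities

variable {q : ℝ}

lemma abs_zpow_neg_two_lt_one (hq : 1 < |q|) : |q ^ (-2 : ℤ)| < 1 := by
  rw [abs_zpow, zpow_neg, zpow_ofNat]
  exact inv_lt_one_of_one_lt₀ (one_lt_pow₀ hq two_ne_zero)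

lemma zpow_two_mul_succ_sub_one (n : ℕ) :
    q ^ (2 * ((n + 1 : ℕ) : ℤ) - 1) = q ^ (2 * n + 1) := by
  rw [← zpow_natCast]; push_cast; ring_nf

lemma inv_mul_zpow_neg_two_pow (hq : q ≠ 0) (n : ℕ) :
    q⁻¹ * (q ^ (-2 : ℤ)) ^ n = (q ^ (2 * n + 1))⁻¹ := by
  rw [← zpow_natCast, ← zpow_mul, ← zpow_natCast, ← zpow_neg, ← zpow_neg_one, ← zpow_add₀ hq]
  push_cast; ring_nf

lemma qPochInf_neg_mul_zpow (hq : 1 < |q|) {lam : ℝ} (hlam : lam ≠ 0) (n : ℕ) :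
    qPochInf (-(lam * q ^ (2 * (n : ℤ) - 1))) (q ^ (-2 : ℤ))
      = qPochInf (-lam / q) (q ^ (-2 : ℤ)) * qPoch (-lam⁻¹ * q⁻¹) (q ^ (-2 : ℤ)) n
          * (lam ^ n * q ^ (n ^ 2)) := by
  have hq₀ : q ≠ 0 := abs_pos.mp (zero_lt_one.trans hq)
  induction n with
  | zero => simp [qPoch, div_eq_mul_inv]
  | succ n ih =>
    have hshift : -(lam * q ^ (2 * ((n + 1 : ℕ) : ℤ) - 1)) * q ^ (-2 : ℤ)
        = -(lam * q ^ (2 * (n : ℤ) - 1)) := by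
      rw [neg_mul, mul_assoc, ← zpow_add₀ hq₀]; congr 3; push_cast; ring
    have hfac :
        1 - -lam⁻¹ * q⁻¹ * (q ^ (-2 : ℤ)) ^ n = 1 + lam⁻¹ * (q ^ (2 * n + 1))⁻¹ := by
      rw [← inv_mul_zpow_neg_two_pow hq₀]; ring
    rw [qPochInf_eq_one_sub_mul (abs_zpow_neg_two_lt_one hq), hshift, ih, qPoch_succ, hfac,
      zpow_two_mul_succ_sub_one, show (n + 1) ^ 2 = n ^ 2 + (2 * n + 1) by ring, pow_add]
    have hx : q ^ (2 * n + 1) ≠ 0 := pow_ne_zero _ hq₀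
    field_simp
    ring

lemma zpow_neg_two_pow (j : ℕ) : (q ^ (-2 : ℤ)) ^ j = (q ^ (2 * j))⁻¹ := by
  rw [← zpow_natCast, ← zpow_mul, ← zpow_natCast, ← zpow_neg]; push_cast; ring_nf

lemma phi11_numerator_eq (lam : ℝ) (k : ℕ) :
    (-1) ^ k * (q ^ (-2 : ℤ)) ^ (k * (k - 1) / 2) * (-lam⁻¹ * q ^ (-2 : ℤ)) ^ k
      = (q ^ k)⁻¹ * (lam ^ k * q ^ (k ^ 2))⁻¹ := by
  have hexp : q ^ (k ^ 2) * q ^ k = q ^ (2 * (k * (k - 1) / 2)) * q ^ (2 * k) := by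
    rw [← pow_add, ← pow_add, Nat.two_mul_div_two_of_even (Nat.even_mul_pred_self k)]
    congr 1
    cases k <;> simp; ring
  have hsign : ((-1 : ℝ) ^ k) * (-1) ^ k = 1 := by rw [← mul_pow]; simp
  calc _ = ((-1) ^ k * (-1) ^ k) * lam⁻¹ ^ k *
          ((q ^ (2 * (k * (k - 1) / 2)))⁻¹ * (q ^ (2 * k))⁻¹) := by
        rw [show -lam⁻¹ * q ^ (-2 : ℤ) = (-1) * (lam⁻¹ * q ^ (-2 : ℤ)) by ring, mul_pow, mul_pow,
          zpow_neg_two_pow, zpow_neg_two_pow]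
        ring
    _ = _ := by rw [hsign, ← mul_inv, ← hexp, inv_pow, mul_inv, mul_inv]; ring

lemma phi11_mul_qExp_div_qExp (hq : 1 < |q|) {lam : ℝ} (hlam : lam ≠ 0) :
    phi11 (-lam⁻¹ * q⁻¹) (q ^ (-2 : ℤ)) (-lam⁻¹ * q ^ (-2 : ℤ)) *
        qExp (q ^ (-2 : ℤ)) (-lam / q) / qExp (q ^ (-2 : ℤ)) (1 / q)
      = ∑' k : ℕ, qPochInf (1 / q) (q ^ (-2 : ℤ)) *
          (q ^ (-(k : ℤ)) / qPoch (q ^ (-2 : ℤ)) (q ^ (-2 : ℤ)) k) *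
          (qPochInf (-(lam * q ^ (2 * (k : ℤ) - 1))) (q ^ (-2 : ℤ)))⁻¹ := by
  rw [phi11, ← tsum_mul_right, ← tsum_div_const]
  refine tsum_congr fun k => ?_
  rw [qPochInf_neg_mul_zpow hq hlam k, phi11_numerator_eq, qExp, qExp, zpow_neg q (k : ℤ),
    zpow_natCast]
  simp only [div_eq_mul_inv, mul_inv, one_mul, inv_inv]
  ring

lemma qPochInf_mul_zpow_div_qPoch_nonneg (hq : 1 < q) (k : ℕ) :
    0 ≤ qPochInf (1 / q) (q ^ (-2 : ℤ)) *
      (q ^ (-(k : ℤ)) / qPoch (q ^ (-2 : ℤ)) (q ^ (-2 : ℤ)) k) := by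
  have hq₀ : 0 < q := one_pos.trans hq
  have hp₀ : 0 ≤ q ^ (-2 : ℤ) := zpow_nonneg hq₀.le _
  have hp₁ : q ^ (-2 : ℤ) ≤ 1 := zpow_le_one_of_nonpos₀ hq.le (by norm_num)
  exact mul_nonneg (qPochInf_nonneg ((div_le_one hq₀).2 hq.le) hp₀ hp₁)
    (div_nonneg (zpow_nonneg hq₀.le _) (qPoch_nonneg hp₁ hp₀ hp₁ k))

end QIdentities

section ExponentialDistribution

variable {r : ℝ}

lemma lintegral_expMeasure {f : ℝ → ℝ≥0∞} (hf : Measurable f) :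
    ∫⁻ x, f x ∂expMeasure r = ∫⁻ x in Ioi 0, ENNReal.ofReal (r * exp (-(r * x))) * f x := by
  change ∫⁻ x, f x ∂volume.withDensity (exponentialPDF r) = _
  rw [lintegral_withDensity_eq_lintegral_mul (f := exponentialPDF r) _
      (measurable_exponentialPDFReal r).ennreal_ofReal hf,
    ← setLIntegral_eq_of_support_subset (s := Ici 0), setLIntegral_congr Ioi_ae_eq_Ici.symm]
  · exact setLIntegral_congr_fun measurableSet_Ioi fun x hx => by
      rw [Pi.mul_apply, exponentialPDF_of_nonneg (mem_Ioi.mp hx).le]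
  · intro x hx
    by_contra hneg
    exact hx (by simp [exponentialPDF_of_neg (not_le.mp hneg)])

lemma integral_exp_neg_mul_expMeasure (hr : 0 < r) {c : ℝ} (hrc : 0 < r + c) :
    ∫ x, exp (-(c * x)) ∂expMeasure r = r / (r + c) := by
  have hint : IntegrableOn (fun x => r * exp (-(r + c) * x)) (Ioi 0) :=
    (integrableOn_exp_mul_Ioi (by linarith) 0).const_mul r
  rw [integral_eq_lintegral_of_nonneg_ae (.of_forall fun x => (exp_pos _).le) (by fun_prop),
    lintegral_expMeasure (by fun_prop),
    setLIntegral_congr_fun measurableSet_Ioi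
      (g := fun x => ENNReal.ofReal (r * exp (-(r + c) * x))) fun x _ => by
        rw [← ENNReal.ofReal_mul (by positivity), mul_assoc, ← exp_add]; ring_nf,
    ← ofReal_integral_eq_lintegral_ofReal hint (.of_forall fun x => by positivity),
    ENNReal.toReal_ofReal (setIntegral_nonneg measurableSet_Ioi fun x _ => by positivity),
    integral_const_mul, integral_exp_mul_Ioi (by linarith)]
  field_simp
  simp

lemma lintegral_ofReal_expMeasure (hr : 0 < r) :
    ∫⁻ x, ENNReal.ofReal x ∂expMeasure r = ENNReal.ofReal r⁻¹ := by
  have hint :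
      IntegrableOn (fun x : ℝ => r * (x ^ (1 : ℝ) * exp (-r * x ^ (1 : ℝ)))) (Ioi 0) :=
    (integrableOn_rpow_mul_exp_neg_mul_rpow (by norm_num) one_pos hr).const_mul r
  simp only [rpow_one] at hint
  rw [lintegral_expMeasure ENNReal.measurable_ofReal,
    setLIntegral_congr_fun measurableSet_Ioi
      (g := fun x => ENNReal.ofReal (r * (x * exp (-r * x)))) fun x hx => by
        rw [← ENNReal.ofReal_mul (by positivity)]; ring_nf,
    ← ofReal_integral_eq_lintegral_ofReal hint (ae_restrict_of_forall_mem measurableSet_Ioi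
      fun x hx => by have := (mem_Ioi.mp hx).le; positivity),
    integral_const_mul]
  have hgamma := integral_rpow_mul_exp_neg_mul_Ioi (a := 2) two_pos hr
  norm_num [rpow_one] at hgamma
  simp_rw [← neg_mul] at hgamma
  rw [hgamma]
  field_simp

lemma ae_nonneg_expMeasure : ∀ᵐ x ∂expMeasure r, 0 ≤ x := by
  rw [ae_iff]
  simp_rw [not_le]
  change volume.withDensity (exponentialPDF r) (Iio 0) = 0
  rw [withDensity_apply _ measurableSet_Iio]
  exact (setLIntegral_congr_fun measurableSet_Iio fun x hx => exponentialPDF_of_neg hx).trans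
    lintegral_zero

lemma map_eq_expMeasure {Ω : Type*} [MeasurableSpace Ω] {μ : Measure Ω}
    [IsProbabilityMeasure μ] {X : Ω → ℝ} (hX : Measurable X) (hnn : ∀ᵐ ω ∂μ, 0 ≤ X ω) (hr : 0 < r)
    (hcdf : ∀ t, 0 ≤ t → μ {ω | X ω ≤ t} = ENNReal.ofReal (1 - exp (-(r * t)))) :
    μ.map X = expMeasure r := by
  have := isProbabilityMeasure_expMeasure hr
  have := Measure.isProbabilityMeasure_map (μ := μ) hX.aemeasurable
  refine Measure.ext_of_Iic _ _ fun t => ?_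
  rw [Measure.map_apply hX measurableSet_Iic, ← ofReal_cdf, cdf_expMeasure_eq hr]
  split_ifs with ht
  · exact hcdf t ht
  · rw [ENNReal.ofReal_zero]
    exact measure_mono_null (fun ω (hω : X ω ≤ t) (h0 : 0 ≤ X ω) => ht (h0.trans hω))
      (ae_iff.mp hnn)

end ExponentialDistribution

section IndependentSeries

variable {Ω : Type*} [MeasurableSpace Ω] {μ : Measure Ω}

lemma ae_summable_of_tsum_lintegral_ne_top {X : ℕ → Ω → ℝ} (hX : ∀ i, AEMeasurable (X i) μ)
    (hnn : ∀ i, ∀ᵐ ω ∂μ, 0 ≤ X i ω) (h : ∑' i, ∫⁻ ω, ENNReal.ofReal (X i ω) ∂μ ≠ ∞) :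
    ∀ᵐ ω ∂μ, Summable fun i => X i ω := by
  have hfin : ∀ᵐ ω ∂μ, ∑' i, ENNReal.ofReal (X i ω) < ∞ :=
    ae_lt_top' (AEMeasurable.tsum fun i => (hX i).ennreal_ofReal)
      (by rwa [lintegral_tsum fun i => (hX i).ennreal_ofReal])
  filter_upwards [hfin, ae_all_iff.2 hnn] with ω hω hω₀
  exact (ENNReal.summable_toReal hω.ne).congr fun i => ENNReal.toReal_ofReal (hω₀ i)

lemma tendsto_prod_integral_exp_neg_of_iIndepFun {X : ℕ → Ω → ℝ} (hX : iIndepFun X μ)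
    (hmeas : ∀ i, Measurable (X i)) (hnn : ∀ i, ∀ᵐ ω ∂μ, 0 ≤ X i ω)
    (hsum : ∀ᵐ ω ∂μ, Summable fun i => X i ω) :
    Tendsto (fun n => ∏ i ∈ Finset.range n, ∫ ω, exp (-X i ω) ∂μ) atTop
      (𝓝 (∫ ω, exp (-∑' i, X i ω) ∂μ)) := by
  have := hX.isProbabilityMeasure
  have hprod (n : ℕ) :
      ∫ ω, ∏ i ∈ Finset.range n, exp (-X i ω) ∂μ
        = ∏ i ∈ Finset.range n, ∫ ω, exp (-X i ω) ∂μ := by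
    have hXn := (hX.comp (fun _ x => exp (-x)) fun _ => by fun_prop).precomp
      (g := ((↑) : Finset.range n → ℕ)) Subtype.val_injective
    simp_rw [← Finset.prod_coe_sort (Finset.range n)]
    exact hXn.integral_fun_prod_eq_prod_integral fun i => by fun_prop
  simp_rw [← hprod]
  refine tendsto_integral_of_dominated_convergence (fun _ => 1) (fun n => by fun_prop)
    (integrable_const 1) (fun n => ?_) ?_
  · filter_upwards [ae_all_iff.2 hnn] with ω hω
    rw [← exp_sum, norm_of_nonneg (exp_pos _).le, exp_le_one_iff]
    exact Finset.sum_nonpos fun i _ => neg_nonpos.mpr (hω i)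
  · filter_upwards [hsum] with ω hω
    simp_rw [← exp_sum]
    exact (continuous_exp.tendsto _).comp hω.hasSum.neg.tendsto_sum_nat

lemma integral_exp_neg_tsum_mul_of_iIndepFun_expMeasure {T : ℕ → Ω → ℝ} (hT : iIndepFun T μ)
    (hmeas : ∀ i, Measurable (T i)) (hlaw : ∀ i, μ.map (T i) = expMeasure 1)
    {a : ℕ → ℝ} (ha : ∀ i, 0 ≤ a i) (hsum : Summable a) :
    ∫ ω, exp (-∑' i, a i * T i ω) ∂μ = (∏' i, (1 + a i))⁻¹ := by
  have hT₀ (i : ℕ) : ∀ᵐ ω ∂μ, 0 ≤ T i ω :=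
    ae_of_ae_map (hmeas i).aemeasurable (hlaw i ▸ ae_nonneg_expMeasure)
  have hnn (i : ℕ) : ∀ᵐ ω ∂μ, 0 ≤ a i * T i ω := (hT₀ i).mono fun ω h => mul_nonneg (ha i) h
  have hmean (i : ℕ) : ∫⁻ ω, ENNReal.ofReal (a i * T i ω) ∂μ = ENNReal.ofReal (a i) := by
    simp_rw [ENNReal.ofReal_mul (ha i)]
    rw [lintegral_const_mul _ (hmeas i).ennreal_ofReal,
      ← lintegral_map ENNReal.measurable_ofReal (hmeas i), hlaw i,
      lintegral_ofReal_expMeasure one_pos, inv_one, ENNReal.ofReal_one, mul_one]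
  have hlaplace (i : ℕ) : ∫ ω, exp (-(a i * T i ω)) ∂μ = (1 + a i)⁻¹ := by
    rw [← integral_map (hmeas i).aemeasurable (by fun_prop) (f := fun x => exp (-(a i * x))),
      hlaw i, integral_exp_neg_mul_expMeasure one_pos (by linarith [ha i]), one_div]
  have hsum_ae := ae_summable_of_tsum_lintegral_ne_top
    (fun i => ((hmeas i).const_mul (a i)).aemeasurable) hnn
    (by simp_rw [hmean]; rw [← ENNReal.ofReal_tsum_of_nonneg ha hsum]; exact ENNReal.ofReal_ne_top)
  have hlim := tendsto_prod_integral_exp_neg_of_iIndepFun (X := fun i ω => a i * T i ω)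
    (hT.comp (fun i x => a i * x) fun i => by fun_prop) (fun i => (hmeas i).const_mul (a i))
    hnn hsum_ae
  simp_rw [hlaplace, Finset.prod_inv_distrib] at hlim
  refine tendsto_nhds_unique hlim ?_
  exact ((Real.multipliable_one_add_of_summable hsum).hasProd.tendsto_prod_nat).inv₀
    (tprod_one_add_ne_zero_of_summable (fun i => by linarith [ha i]) (by simpa using hsum.abs))

lemma integral_exp_neg_mul_tsum_zpow_mul {q : ℝ} (hq : 1 < |q|) {T : ℕ → Ω → ℝ}
    (hT : iIndepFun T μ) (hmeas : ∀ i, Measurable (T i)) (hlaw : ∀ i, μ.map (T i) = expMeasure 1)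
    {c : ℝ} (hc : 0 ≤ c) :
    ∫ ω, exp (-c * ∑' i : ℕ, q ^ (-2 * (i : ℤ)) * T i ω) ∂μ
      = (qPochInf (-c) (q ^ (-2 : ℤ)))⁻¹ := by
  have hpow (i : ℕ) : q ^ (-2 * (i : ℤ)) = (q ^ (-2 : ℤ)) ^ i := by rw [zpow_mul, zpow_natCast]
  have h := integral_exp_neg_tsum_mul_of_iIndepFun_expMeasure hT hmeas hlaw
    (a := fun i => c * q ^ (-2 * (i : ℤ)))
    (fun i => mul_nonneg hc (Even.zpow_nonneg ⟨-(i : ℤ), by ring⟩ q))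
    (((summable_geometric_of_abs_lt_one (abs_zpow_neg_two_lt_one hq)).mul_left c).congr
      fun i => by rw [hpow])
  simp_rw [mul_assoc, tsum_mul_left, ← neg_mul] at h
  rw [h, qPochInf]
  simp_rw [hpow, neg_mul, sub_neg_eq_add]

lemma integral_comp_eq_tsum_of_indepFun_nat [IsProbabilityMeasure μ] {N : Ω → ℕ} {S : Ω → ℝ}
    (hN : Measurable N) (hS : AEMeasurable S μ) (hNS : IndepFun N S μ) {f : ℕ → ℝ → ℝ}
    (hf : ∀ n, Measurable (f n)) {C : ℝ} (hbdd : ∀ n, ∀ᵐ ω ∂μ, |f n (S ω)| ≤ C) :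
    ∫ ω, f (N ω) (S ω) ∂μ = ∑' n, μ.real {ω | N ω = n} * ∫ ω, f n (S ω) ∂μ := by
  have hlevel (n : ℕ) : MeasurableSet {ω | N ω = n} := hN (measurableSet_singleton n)
  have hint : Integrable (fun ω => f (N ω) (S ω)) μ := by
    refine .of_bound (((measurable_from_prod_countable_right (f := fun p : ℕ × ℝ => f p.1 p.2) hf
      ).comp_aemeasurable (hN.aemeasurable.prodMk hS)).aestronglyMeasurable) C ?_
    filter_upwards [ae_all_iff.2 hbdd] with ω hω using hω (N ω)
  have hcover : (⋃ n, {ω | N ω = n}) = univ := iUnion_eq_univ_iff.2 fun ω => ⟨N ω, rfl⟩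
  rw [← setIntegral_univ, ← hcover, integral_iUnion hlevel
    (fun m n hmn => disjoint_left.2 fun ω hm hn => hmn (hm.symm.trans hn)) hint.integrableOn]
  refine tsum_congr fun n => ?_
  rw [setIntegral_congr_fun (hlevel n) fun ω (hω : N ω = n) => by rw [hω]]
  exact Indep.setIntegral_eq_mul hN.comap_le hNS hS ⟨{n}, measurableSet_singleton n, rfl⟩
    (hf n).aestronglyMeasurable

end IndependentSeries

/-- let `N` have the q-Poisson law
`P{N = k} = (1/e_{q^{-2}}(1/q)) q^{-k}/(q^{-2};q^{-2})_k` and be independent of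
`S = Σ_{i≥0} q^{-2i} T_i`, where the `T_i` are i.i.d. rate-1 exponentials. Then
`E[exp(-λ q^{2N-1} S)] = ₁φ₁(0; -λ⁻¹q⁻¹; q^{-2}; -λ⁻¹q^{-2}) e_{q^{-2}}(-λ/q) / e_{q^{-2}}(1/q)`,
which is the Laplace transform `H_{0,-∞}(λ)` of the hitting time of 0. -/
theorem hitting_time_laplace {Ω : Type*} [MeasurableSpace Ω] (μ : Measure Ω)
    [IsProbabilityMeasure μ] (q : ℝ) (hq : 1 < q) (T : ℕ → Ω → ℝ) (N : Ω → ℕ)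
    (hmeasT : ∀ i, Measurable (T i)) (hmeasN : Measurable N)
    (hindepT : iIndepFun T μ)
    (hposT : ∀ i, ∀ᵐ ω ∂μ, 0 ≤ T i ω)
    (hlawT : ∀ i, ∀ t : ℝ, 0 ≤ t → μ {ω | T i ω ≤ t} = ENNReal.ofReal (1 - Real.exp (-t)))
    (hlawN : ∀ k : ℕ, μ {ω | N ω = k}
      = ENNReal.ofReal ((1 / qExp (q ^ (-2 : ℤ)) (1 / q)) *
          (q ^ (-(k : ℤ)) / qPoch (q ^ (-2 : ℤ)) (q ^ (-2 : ℤ)) k)))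
    (hindepNS : IndepFun N (fun ω => ∑' i : ℕ, q ^ (-2 * (i : ℤ)) * T i ω) μ)
    (lam : ℝ) (hlam : 0 < lam) :
    ∫ ω, Real.exp (-lam * q ^ (2 * (N ω : ℤ) - 1) *
        ∑' i : ℕ, q ^ (-2 * (i : ℤ)) * T i ω) ∂μ
      = phi11 (-lam⁻¹ * q⁻¹) (q ^ (-2 : ℤ)) (-lam⁻¹ * q ^ (-2 : ℤ)) *
          qExp (q ^ (-2 : ℤ)) (-lam / q) / qExp (q ^ (-2 : ℤ)) (1 / q) := by
  have hq₀ : 0 < q := one_pos.trans hq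
  have hq' : 1 < |q| := by rwa [abs_of_pos hq₀]
  have hlaw (i : ℕ) : μ.map (T i) = expMeasure 1 :=
    map_eq_expMeasure (hmeasT i) (hposT i) one_pos fun t ht => by simpa using hlawT i t ht
  have hS_nonneg : ∀ᵐ ω ∂μ, 0 ≤ ∑' i : ℕ, q ^ (-2 * (i : ℤ)) * T i ω := by
    filter_upwards [ae_all_iff.2 hposT] with ω hω
    exact tsum_nonneg fun i => mul_nonneg (Even.zpow_nonneg ⟨-(i : ℤ), by ring⟩ q) (hω i)
  have hbdd (n : ℕ) : ∀ᵐ ω ∂μ,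
      |exp (-lam * q ^ (2 * (n : ℤ) - 1) * ∑' i : ℕ, q ^ (-2 * (i : ℤ)) * T i ω)| ≤ 1 := by
    filter_upwards [hS_nonneg] with ω hω
    rw [abs_of_pos (exp_pos _), exp_le_one_iff, neg_mul]
    exact mul_nonpos_of_nonpos_of_nonneg
      (neg_nonpos.2 (mul_pos hlam (zpow_pos hq₀ _)).le) hω
  rw [integral_comp_eq_tsum_of_indepFun_nat hmeasN
      (Measurable.tsum fun i => (hmeasT i).const_mul _).aemeasurable hindepNS
      (f := fun n s => exp (-lam * q ^ (2 * (n : ℤ) - 1) * s)) (fun n => by fun_prop) hbdd,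
    phi11_mul_qExp_div_qExp hq' hlam.ne']
  refine tsum_congr fun k => ?_
  have hlaplace := integral_exp_neg_mul_tsum_zpow_mul hq' hindepT hmeasT hlaw
    (mul_pos hlam (zpow_pos hq₀ (2 * (k : ℤ) - 1))).le
  simp only [neg_mul] at hlaplace ⊢
  rw [measureReal_def, hlawN k, hlaplace, qExp, one_div_one_div,
    ENNReal.toReal_ofReal (qPochInf_mul_zpow_div_qPoch_nonneg hq k)]
end
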